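/- (Convergence of the IMEX scheme, case ζ > γ) Let n_ξ ≥ 2, n_x ≥ 1 be integers, γ, ν, τ, h_ξ > 0 reals, A = (1+γτ) I_{n_ξ} − (τν/h_ξ²) Δ with Δ the n_ξ×n_ξ Neumann finite-difference Laplacian matrix. Let N : ℝ^{n_ξ×n_x} → ℝ^{n_ξ×n_x} satisfy |N(V) − N(U)|_∞ ≤ ζ |V − U|_∞ for all V, U, with constant ζ ≥ 0. Let (V^n) and (V_*^n) be sequences in ℝ^{n_ξ×n_x} with V^0 = V_*^0, satisfying A V^n = V^{n−1} + τ N(V^{n−1}) + τ G^{n−1} and A V_*^n = V_*^{n−1} + τ N(V_*^{n−1}) + τ G^{n−1} + τ R^{n−1} for all n ≥ 1, where |R^{n−1}|_∞ ≤ ω for a constant ω ≥ 0. If ζ > γ, then for every n with 1 ≤ n ≤ n_t one has |V^n − V_*^n|_∞ ≤ (ω/(ζ − γ)) exp( (ζ − γ) T / (1 + γτ) ), where T = n_t τ. -/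

import Mathlib

open Real Finset

/-- The `n × n` second-order centred finite-difference Laplacian incorporating
Neumann boundary conditions. -/
def neumannLaplacian (n : ℕ) : Matrix (Fin n) (Fin n) ℝ :=
  Matrix.of fun i j =>
    if (i : ℕ) = (j : ℕ) then -2
    else if (i : ℕ) = 0 ∧ (j : ℕ) = 1 then 2
    else if (i : ℕ) = n - 1 ∧ (j : ℕ) = n - 2 then 2
    else if (j : ℕ) + 1 = (i : ℕ) ∨ (i : ℕ) + 1 = (j : ℕ) then 1
    else 0

/-- The matrix norm induced by the vector `∞`-norm:
`|M|_∞ = max_i Σ_j |M i j|`. -/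
noncomputable def matInfNorm {m n : ℕ} (M : Matrix (Fin m) (Fin n) ℝ) : ℝ :=
  ⨆ i, ∑ j, |M i j|

/-! The scheme matrix `A = (1 + γτ) I - μ Δ` satisfies `(1 + γτ) |E|_∞ ≤ |A E|_∞`: evaluate `A E` on
a row of `E` of maximal absolute sum and use that `Δ` has nonnegative off-diagonal entries and
nonpositive row sums (a discrete maximum principle). Subtracting the two schemes, the error
`eₙ = |Vⁿ - V*ⁿ|_∞` obeys `eₙ₊₁ ≤ α eₙ + β` with `α = (1 + ζτ)/(1 + γτ) > 1`, `β = τω/(1 + γτ)` and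
`e₀ = 0`, hence `eₙ ≤ β (αⁿ - 1)/(α - 1) ≤ (ω/(ζ - γ)) exp(n_t (α - 1))` since `α ≤ exp (α - 1)`. -/

attribute [local instance] Matrix.linftyOpNormedAddCommGroup Matrix.linftyOpNormedSpace

section matInfNorm

variable {m n : ℕ}

theorem matInfNorm_eq_norm (M : Matrix (Fin m) (Fin n) ℝ) : matInfNorm M = ‖M‖ := by
  rw [Matrix.linfty_opNorm_def, Finset.sup_univ_eq_ciSup, NNReal.coe_iSup]
  simp [matInfNorm]

theorem matInfNorm_nonneg (M : Matrix (Fin m) (Fin n) ℝ) : 0 ≤ matInfNorm M :=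
  matInfNorm_eq_norm M ▸ norm_nonneg M

theorem sum_abs_le_matInfNorm (M : Matrix (Fin m) (Fin n) ℝ) (i : Fin m) :
    ∑ j, |M i j| ≤ matInfNorm M :=
  le_ciSup (f := fun i => ∑ j, |M i j|) (Set.finite_range _).bddAbove i

theorem exists_sum_abs_eq_matInfNorm [Nonempty (Fin m)] (M : Matrix (Fin m) (Fin n) ℝ) :
    ∃ i, ∑ j, |M i j| = matInfNorm M :=
  exists_eq_ciSup_of_finite

theorem sum_abs_sum_mul_le_matInfNorm {s : Finset (Fin m)} {a : Fin m → ℝ}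
    (ha : ∀ k ∈ s, 0 ≤ a k) (M : Matrix (Fin m) (Fin n) ℝ) :
    ∑ j, |∑ k ∈ s, a k * M k j| ≤ (∑ k ∈ s, a k) * matInfNorm M :=
  calc ∑ j, |∑ k ∈ s, a k * M k j|
      ≤ ∑ j, ∑ k ∈ s, a k * |M k j| := sum_le_sum fun j _ =>
        (abs_sum_le_sum_abs _ _).trans_eq <| sum_congr rfl fun k hk => by
          rw [abs_mul, abs_of_nonneg (ha k hk)]
    _ = ∑ k ∈ s, a k * ∑ j, |M k j| := by rw [sum_comm]; simp only [mul_sum]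
    _ ≤ ∑ k ∈ s, a k * matInfNorm M :=
        sum_le_sum fun k hk => mul_le_mul_of_nonneg_left (sum_abs_le_matInfNorm M k) (ha k hk)
    _ = (∑ k ∈ s, a k) * matInfNorm M := (sum_mul ..).symm

end matInfNorm

theorem mul_abs_sub_mul_abs_le {d μ x t : ℝ} (hμ : 0 ≤ μ) :
    d * |x| - μ * |t| ≤ |d * x - μ * t| := by
  have h := abs_sub_abs_le_abs_sub (d * x) (μ * t)
  rw [abs_mul d, abs_mul μ, abs_of_nonneg hμ] at h
  nlinarith [le_abs_self d, abs_nonneg x]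

theorem mul_matInfNorm_le_matInfNorm_smul_one_sub_smul_mul {m n : ℕ}
    {L : Matrix (Fin m) (Fin m) ℝ} (hL : ∀ i k, k ≠ i → 0 ≤ L i k) (hL_row : ∀ i, ∑ k, L i k ≤ 0)
    (c : ℝ) {μ : ℝ} (hμ : 0 ≤ μ) (E : Matrix (Fin m) (Fin n) ℝ) :
    c * matInfNorm E ≤ matInfNorm ((c • (1 : Matrix (Fin m) (Fin m) ℝ) - μ • L) * E) := by
  rcases isEmpty_or_nonempty (Fin m) with hm | hm
  · simp [matInfNorm]
  obtain ⟨i, hi⟩ := exists_sum_abs_eq_matInfNorm E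
  set d := c - μ * L i i
  set T : Fin n → ℝ := fun j => ∑ k ∈ univ.erase i, L i k * E k j
  have hentry : ∀ j, ((c • (1 : Matrix (Fin m) (Fin m) ℝ) - μ • L) * E) i j =
      d * E i j - μ * T j := by
    intro j
    rw [Matrix.sub_mul, Matrix.smul_mul, Matrix.smul_mul, Matrix.one_mul]
    simp only [Matrix.sub_apply, Matrix.smul_apply, Matrix.mul_apply, smul_eq_mul, T, d]
    rw [← add_sum_erase _ _ (mem_univ i), mul_add, mul_sum]
    ring
  have hT : ∑ j, |T j| ≤ (∑ k ∈ univ.erase i, L i k) * matInfNorm E :=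
    sum_abs_sum_mul_le_matInfNorm (fun k hk => hL i k (ne_of_mem_erase hk)) E
  have hrow : L i i + ∑ k ∈ univ.erase i, L i k ≤ 0 := by
    rw [add_sum_erase _ _ (mem_univ i)]
    exact hL_row i
  calc c * matInfNorm E
      ≤ d * matInfNorm E - μ * ((∑ k ∈ univ.erase i, L i k) * matInfNorm E) := by
        have := mul_nonneg (mul_nonneg hμ (neg_nonneg.mpr hrow)) (matInfNorm_nonneg E)
        simp only [d]
        linarith
    _ ≤ d * ∑ j, |E i j| - μ * ∑ j, |T j| := by rw [hi]; gcongr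
    _ ≤ ∑ j, |((c • (1 : Matrix (Fin m) (Fin m) ℝ) - μ • L) * E) i j| := by
        rw [mul_sum, mul_sum, ← sum_sub_distrib]
        exact sum_le_sum fun j _ => (hentry j).symm ▸ mul_abs_sub_mul_abs_le hμ
    _ ≤ matInfNorm ((c • (1 : Matrix (Fin m) (Fin m) ℝ) - μ • L) * E) :=
        sum_abs_le_matInfNorm _ i

theorem Finset.sum_ite_le_of_subsingleton {ι : Type*} [Fintype ι] (p : ι → Prop)
    [DecidablePred p] (hp : ∀ a b, p a → p b → a = b) {c : ℝ} (hc : 0 ≤ c) :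
    ∑ k, (if p k then c else 0) ≤ c := by
  rw [sum_ite, sum_const_zero, add_zero, sum_const, nsmul_eq_mul]
  have : (#(univ.filter p) : ℝ) ≤ 1 := by
    exact_mod_cast card_le_one.mpr fun a ha b hb => hp a b (mem_filter.1 ha).2 (mem_filter.1 hb).2
  nlinarith

section neumannLaplacian

variable {n : ℕ}

theorem neumannLaplacian_nonneg_of_ne {i k : Fin n} (h : k ≠ i) :
    0 ≤ neumannLaplacian n i k := by
  have : (i : ℕ) ≠ k := fun h' => h (Fin.ext h'.symm)
  simp only [neumannLaplacian, Matrix.of_apply]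
  split_ifs <;> first | omega | norm_num

theorem sum_neumannLaplacian_row_nonpos (i : Fin n) : ∑ k, neumannLaplacian n i k ≤ 0 := by
  -- `p` and `2 - p` bound the entries at the left and right neighbours of `i`
  set p : ℝ := if (i : ℕ) = 0 then 0 else if (i : ℕ) = n - 1 then 2 else 1 with hp
  have hp0 : 0 ≤ p := by rw [hp]; split_ifs <;> norm_num
  have hp2 : p ≤ 2 := by rw [hp]; split_ifs <;> norm_num
  have hbound : ∀ k, neumannLaplacian n i k ≤ (if k = i then -2 else 0) +
      (if (k : ℕ) + 1 = i then p else 0) + (if (i : ℕ) + 1 = k then 2 - p else 0) := by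
    intro k
    have hk := k.isLt
    have hi := i.isLt
    simp only [neumannLaplacian, Matrix.of_apply, hp, Fin.ext_iff]
    split_ifs <;> (try norm_num) <;> omega
  calc ∑ k, neumannLaplacian n i k
      ≤ ∑ k, ((if k = i then -2 else 0) +
          (if (k : ℕ) + 1 = i then p else 0) + (if (i : ℕ) + 1 = k then 2 - p else 0)) :=
        sum_le_sum fun k _ => hbound k
    _ ≤ -2 + p + (2 - p) := by
        rw [sum_add_distrib, sum_add_distrib, sum_ite_eq' univ i]
        simp only [mem_univ, if_true]
        gcongr
        · exact sum_ite_le_of_subsingleton _ (fun a b ha hb => Fin.ext (by omega)) hp0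
        · exact sum_ite_le_of_subsingleton _ (fun a b ha hb => Fin.ext (by omega)) (by linarith)
    _ = 0 := by ring

end neumannLaplacian

theorem mul_matInfNorm_sub_le_of_step {m n : ℕ} {A : Matrix (Fin m) (Fin m) ℝ} {c τ ζ ω : ℝ}
    {N : Matrix (Fin m) (Fin n) ℝ → Matrix (Fin m) (Fin n) ℝ}
    {U U' W W' G R : Matrix (Fin m) (Fin n) ℝ}
    (hA : ∀ E : Matrix (Fin m) (Fin n) ℝ, c * matInfNorm E ≤ matInfNorm (A * E)) (hτ : 0 ≤ τ)
    (hN : matInfNorm (N U - N W) ≤ ζ * matInfNorm (U - W)) (hR : matInfNorm R ≤ ω)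
    (hU : A * U' = U + τ • N U + τ • G) (hW : A * W' = W + τ • N W + τ • G + τ • R) :
    c * matInfNorm (U' - W') ≤ (1 + τ * ζ) * matInfNorm (U - W) + τ * ω := by
  have herr : A * (U' - W') = (U - W) + τ • (N U - N W) - τ • R := by
    rw [Matrix.mul_sub, hU, hW, smul_sub]
    abel
  calc c * matInfNorm (U' - W') ≤ matInfNorm (A * (U' - W')) := hA _
    _ = matInfNorm ((U - W) + τ • (N U - N W) - τ • R) := by rw [herr]
    _ ≤ matInfNorm (U - W) + τ * matInfNorm (N U - N W) + τ * matInfNorm R := by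
        simp only [matInfNorm_eq_norm]
        calc _ ≤ ‖U - W + τ • (N U - N W)‖ + ‖τ • R‖ := norm_sub_le _ _
          _ ≤ ‖U - W‖ + ‖τ • (N U - N W)‖ + ‖τ • R‖ := by gcongr; exact norm_add_le _ _
          _ = _ := by simp only [norm_smul, Real.norm_of_nonneg hτ]
    _ ≤ matInfNorm (U - W) + τ * (ζ * matInfNorm (U - W)) + τ * ω := by gcongr
    _ = (1 + τ * ζ) * matInfNorm (U - W) + τ * ω := by ring

theorem le_mul_geom_sum_of_le_mul_add {e : ℕ → ℝ} {α β : ℝ} (hα : 0 ≤ α) (h0 : e 0 ≤ 0)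
    (hstep : ∀ n, e (n + 1) ≤ α * e n + β) (n : ℕ) : e n ≤ β * ∑ k ∈ range n, α ^ k := by
  induction n with
  | zero => simpa using h0
  | succ n ih =>
    rw [geom_sum_succ]
    nlinarith [hstep n, mul_le_mul_of_nonneg_left ih hα]

theorem geom_sum_le_exp_mul_div_sub_one {α : ℝ} (hα : 1 < α) {n N : ℕ} (hn : n ≤ N) :
    ∑ k ∈ range n, α ^ k ≤ exp (N * (α - 1)) / (α - 1) := by
  rw [geom_sum_eq hα.ne']
  gcongr ?_ / _
  calc α ^ n - 1 ≤ α ^ N := by linarith [pow_le_pow_right₀ hα.le hn]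
    _ ≤ exp (α - 1) ^ N := pow_le_pow_left₀ (by linarith) (by linarith [add_one_le_exp (α - 1)]) N
    _ = exp (N * (α - 1)) := (exp_nat_mul _ _).symm

theorem IMEX_convergence_supercritical_general (nξ nx : ℕ)
    (γ ν τ hξ ζ ω : ℝ) (hγ : 0 < γ) (hν : 0 < ν) (hτ : 0 < τ)
    (hω : 0 ≤ ω)
    (A : Matrix (Fin nξ) (Fin nξ) ℝ)
    (hA : A = (1 + γ * τ) • (1 : Matrix (Fin nξ) (Fin nξ) ℝ)
            - (τ * ν / hξ ^ 2) • neumannLaplacian nξ)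
    (N : Matrix (Fin nξ) (Fin nx) ℝ → Matrix (Fin nξ) (Fin nx) ℝ)
    (hN : ∀ V U, matInfNorm (N V - N U) ≤ ζ * matInfNorm (V - U))
    (V Vs G R : ℕ → Matrix (Fin nξ) (Fin nx) ℝ)
    (h0 : V 0 = Vs 0)
    (hV : ∀ n : ℕ, A * V (n + 1) = V n + τ • N (V n) + τ • G n)
    (hVs : ∀ n : ℕ, A * Vs (n + 1) = Vs n + τ • N (Vs n) + τ • G n + τ • R n)
    (hR : ∀ n : ℕ, matInfNorm (R n) ≤ ω)
    (hζγ : γ < ζ) (nt : ℕ) (T : ℝ) (hT : T = nt * τ) :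
    ∀ n : ℕ, 1 ≤ n → n ≤ nt →
      matInfNorm (V n - Vs n) ≤ (ω / (ζ - γ)) * Real.exp ((ζ - γ) * T / (1 + γ * τ)) := by
  intro n _ hn
  have hc : 0 < 1 + γ * τ := by positivity
  set α := (1 + τ * ζ) / (1 + γ * τ)
  set β := τ * ω / (1 + γ * τ)
  have hα : α - 1 = τ * (ζ - γ) / (1 + γ * τ) := by
    simp only [α]
    field_simp
    ring
  have hα1 : 1 < α := by rw [← sub_pos, hα]; have := sub_pos.2 hζγ; positivity
  have hstab : ∀ E : Matrix (Fin nξ) (Fin nx) ℝ,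
      (1 + γ * τ) * matInfNorm E ≤ matInfNorm (A * E) := fun E => hA ▸
    mul_matInfNorm_le_matInfNorm_smul_one_sub_smul_mul (fun _ _ => neumannLaplacian_nonneg_of_ne)
      sum_neumannLaplacian_row_nonpos _ (by positivity) E
  have hstep : ∀ k, matInfNorm (V (k + 1) - Vs (k + 1)) ≤ α * matInfNorm (V k - Vs k) + β := by
    intro k
    have := mul_matInfNorm_sub_le_of_step hstab hτ.le (hN _ _) (hR k) (hV k) (hVs k)
    rw [div_mul_eq_mul_div, ← add_div, le_div_iff₀ hc]
    linarith
  have he0 : matInfNorm (V 0 - Vs 0) ≤ 0 := by simp [h0, matInfNorm_eq_norm]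
  calc matInfNorm (V n - Vs n) ≤ β * ∑ k ∈ range n, α ^ k :=
        le_mul_geom_sum_of_le_mul_add (e := fun k => matInfNorm (V k - Vs k)) (by positivity)
          he0 hstep n
    _ ≤ β * (exp (nt * (α - 1)) / (α - 1)) := by
        gcongr
        exact geom_sum_le_exp_mul_div_sub_one hα1 hn
    _ = ω / (ζ - γ) * exp ((ζ - γ) * T / (1 + γ * τ)) := by
        have : ζ - γ ≠ 0 := (sub_pos.2 hζγ).ne'
        rw [hα, hT]
        simp only [β]
        field_simp

/-- (Convergence of the IMEX scheme, case `ζ > γ`.)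
`|Vⁿ - V*ⁿ|_∞ ≤ (ω/(ζ - γ)) exp((ζ - γ) T /(1 + γτ))` for `1 ≤ n ≤ n_t`,
where `T = n_t τ`. -/
theorem IMEX_convergence_supercritical (nξ nx : ℕ) (hnξ : 2 ≤ nξ) (hnx : 1 ≤ nx)
    (γ ν τ hξ ζ ω : ℝ) (hγ : 0 < γ) (hν : 0 < ν) (hτ : 0 < τ) (hhξ : 0 < hξ)
    (hζ : 0 ≤ ζ) (hω : 0 ≤ ω)
    (A : Matrix (Fin nξ) (Fin nξ) ℝ)
    (hA : A = (1 + γ * τ) • (1 : Matrix (Fin nξ) (Fin nξ) ℝ)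
            - (τ * ν / hξ ^ 2) • neumannLaplacian nξ)
    (N : Matrix (Fin nξ) (Fin nx) ℝ → Matrix (Fin nξ) (Fin nx) ℝ)
    (hN : ∀ V U, matInfNorm (N V - N U) ≤ ζ * matInfNorm (V - U))
    (V Vs G R : ℕ → Matrix (Fin nξ) (Fin nx) ℝ)
    (h0 : V 0 = Vs 0)
    (hV : ∀ n : ℕ, A * V (n + 1) = V n + τ • N (V n) + τ • G n)
    (hVs : ∀ n : ℕ, A * Vs (n + 1) = Vs n + τ • N (Vs n) + τ • G n + τ • R n)
    (hR : ∀ n : ℕ, matInfNorm (R n) ≤ ω)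
    (hζγ : γ < ζ) (nt : ℕ) (T : ℝ) (hT : T = nt * τ) :
    ∀ n : ℕ, 1 ≤ n → n ≤ nt →
      matInfNorm (V n - Vs n) ≤ (ω / (ζ - γ)) * Real.exp ((ζ - γ) * T / (1 + γ * τ)) :=
  IMEX_convergence_supercritical_general nξ nx γ ν τ hξ ζ ω hγ hν hτ hω A hA N hN V Vs G R h0 hV hVs
    hR hζγ nt T hT
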